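/- Let u(t) solve the projected system u'(t) = -H_m u(t) + α(t) β e₁ with u(0) = 0, and suppose the Arnoldi decomposition A V_m = V_m H_m + R_m holds with R_m = ĥ v_{m+1} e_m^T for a scalar ĥ and unit vector v_{m+1}. Define the restart: y₀^{new}(t) = v + V_m u(t), \hat α(t) = -ĥ e_m^T u(t), \hat g = v_{m+1}. Then the residual of y₀^{new} with respect to the original equation y' = -A y + α(t) g (with initial residual α(t)g, g = β V_m e₁, A v = 0) equals \hat α(t) \hat g, i.e., the residual retains the 'scalar function times constant vector' form after restarting. -/
import Mathlib


open Matrix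

lemma vecMulVec_mulVec' {n m : ℕ} (w : Fin n → ℝ) (b x : Fin m → ℝ) :
    (vecMulVec w b).mulVec x = (b ⬝ᵥ x) • w := by
  funext i
  simp [vecMulVec_apply, mulVec, dotProduct, Finset.mul_sum, mul_assoc, smul_eq_mul,
    Finset.sum_mul, mul_comm, mul_left_comm]

/-- Restarting: with Arnoldi decomposition A Vₘ = Vₘ Hₘ + ĥ v_{m+1} eₘᵀ and u solving the
projected system u' = -Hₘ u + α(t)β e₁, u(0)=0, the residual of the restarted approximation
y₀ⁿᵉʷ(t) = v + Vₘ u(t) (with g = β Vₘ e₁, A v = 0) equals α̂(t) ĝ where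
α̂(t) = -ĥ eₘᵀ u(t) and ĝ = v_{m+1}: the 'scalar times constant vector' form is retained. -/
theorem restart_residual_retains_form
    (n k : ℕ) (A : Matrix (Fin n) (Fin n) ℝ)
    (Vm : Matrix (Fin n) (Fin (k + 1)) ℝ) (Hm : Matrix (Fin (k + 1)) (Fin (k + 1)) ℝ)
    (hhat : ℝ) (vnext : Fin n → ℝ) (hunit : vnext ⬝ᵥ vnext = 1)
    (hArn : A * Vm = Vm * Hm + hhat • vecMulVec vnext (Pi.single (Fin.last k) (1 : ℝ)))
    (α : ℝ → ℝ) (β : ℝ) (g v : Fin n → ℝ)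
    (hv : A.mulVec v = 0)
    (hg : g = β • Vm.mulVec (Pi.single (0 : Fin (k + 1)) 1 : Fin (k + 1) → ℝ))
    (u : ℝ → Fin (k + 1) → ℝ)
    (hu : ∀ t : ℝ, HasDerivAt u
      (-(Hm.mulVec (u t)) + (α t * β) • (Pi.single (0 : Fin (k + 1)) 1 : Fin (k + 1) → ℝ)) t)
    (hu0 : u 0 = 0) :
    ∀ (t : ℝ) (d : Fin n → ℝ), HasDerivAt (fun s => v + Vm.mulVec (u s)) d t →
      -d - A.mulVec (v + Vm.mulVec (u t)) + α t • g = (-(hhat * u t (Fin.last k))) • vnext := by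
  intro t d hd
  set u' : Fin (k + 1) → ℝ :=
    -(Hm.mulVec (u t)) + (α t * β) • (Pi.single (0 : Fin (k + 1)) 1 : Fin (k + 1) → ℝ) with hu'
  have hL : HasDerivAt (fun s => v + Vm.mulVec (u s)) (Vm.mulVec u') t := by
    have := ((Matrix.mulVecLin Vm).toContinuousLinearMap.hasFDerivAt.comp_hasDerivAt t
      (hu t)).const_add v
    simpa using this
  have hdeq : d = Vm.mulVec u' := hd.unique hL
  subst hdeq
  have hA : A.mulVec (v + Vm.mulVec (u t)) =
      Vm.mulVec (Hm.mulVec (u t)) + (hhat * u t (Fin.last k)) • vnext := by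
    rw [Matrix.mulVec_add, hv, Matrix.mulVec_mulVec, hArn, Matrix.add_mulVec,
      Matrix.smul_mulVec, vecMulVec_mulVec', ← Matrix.mulVec_mulVec]
    simp [dotProduct, Pi.single_apply, smul_smul]
  rw [hA, hu', hg]
  rw [Matrix.mulVec_add, Matrix.mulVec_neg, Matrix.mulVec_smul]
  module
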